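/- arXiv:1507.06745 — 2 statements merged into one kernel-verified Lean document; each statement's English description precedes it below -/
import Mathlib

section
/- Every maximal (non-extendable) directed walk in the rule supernetwork Υ starting from any network either terminates at a pairwise stable network, or eventually enters and remains in a basin containing at least two networks. In particular, if all basins are singletons, every sufficiently long sequence of permitted network formation operations reaches a pairwise stable network. -/
/-- Path dominance: a finite directed path in the rule supernetwork `Υ` from `G` to `G'`. -/
def nfgReach {𝔾 : Type*} (Υ : 𝔾 → 𝔾 → Prop) (G G' : 𝔾) : Prop :=
  Relation.ReflTransGen Υ G G'

/-- A basin: a path-equivalence class with no outgoing edges in the acyclic supernetwork. -/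
def nfgIsBasin {𝔾 : Type*} (Υ : 𝔾 → 𝔾 → Prop) (B : Set 𝔾) : Prop :=
  ∃ G : 𝔾, B = {G' | nfgReach Υ G G' ∧ nfgReach Υ G' G} ∧
    ∀ G', nfgReach Υ G G' → nfgReach Υ G' G

/-- A maximal directed walk in `Υ`: at each step either a permitted operation is performed,
or the current network has no outgoing edges (it is non-extendable) and the walk stays put. -/
def nfgMaxWalk {𝔾 : Type*} (Υ : 𝔾 → 𝔾 → Prop) (g : ℕ → 𝔾) : Prop :=
  ∀ k, Υ (g k) (g (k + 1)) ∨ ((∀ y, ¬ Υ (g k) y) ∧ g (k + 1) = g k)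

/-- Fairness (modelling the random turns of the network formation process): any operation
available infinitely often is eventually taken, i.e. if `Υ x y` and `x` is visited
infinitely often then `y` is visited infinitely often. -/
def nfgFair {𝔾 : Type*} (Υ : 𝔾 → 𝔾 → Prop) (g : ℕ → 𝔾) : Prop :=
  ∀ x y, Υ x y → (∀ n, ∃ m, n ≤ m ∧ g m = x) → ∀ n, ∃ m, n ≤ m ∧ g m = y

/-!
The walk lives in a finite set, so the set `R` of networks it visits infinitely often is
nonempty and the walk eventually stays in `R`. Any two members of `R` reach each other along
the walk, and fairness makes `R` closed under `Υ`; hence `R` is a basin. Either some member of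
`R` is a sink, which the walk visits, or every member has a successor in `R`, which differs from
it because `Υ` has no self-loops, so `R` has at least two elements.
-/

open Filter

def recurrentSet {α : Type*} (g : ℕ → α) : Set α :=
  {x | ∃ᶠ m in atTop, g m = x}

section Recurrence

variable {α : Type*} {g : ℕ → α}

theorem eventually_mem_recurrentSet [Finite α] : ∀ᶠ m in atTop, g m ∈ recurrentSet g := by
  have hleave : ∀ x, ∀ᶠ m in atTop, x ∉ recurrentSet g → g m ≠ x := fun x => by
    by_cases hx : x ∈ recurrentSet g
    · exact .of_forall fun _ h => (h hx).elim
    · exact (not_frequently.mp hx).mono fun _ hm _ => hm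
  filter_upwards [eventually_all.mpr hleave] with m hm
  by_contra h
  exact hm (g m) h rfl

theorem recurrentSet_nonempty [Finite α] : (recurrentSet g).Nonempty :=
  let ⟨m, hm⟩ := (eventually_mem_recurrentSet (g := g)).exists
  ⟨g m, hm⟩

variable {Υ : α → α → Prop}

theorem nfgMaxWalk.nfgReach_of_le (hwalk : nfgMaxWalk Υ g) {m n : ℕ} (hmn : m ≤ n) :
    nfgReach Υ (g m) (g n) := by
  induction n, hmn using Nat.le_induction with
  | base => exact .refl
  | succ n _ ih =>
    rcases hwalk n with hstep | ⟨_, hstay⟩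
    · exact ih.tail hstep
    · exact hstay ▸ ih

theorem nfgMaxWalk.nfgReach_of_mem_recurrentSet (hwalk : nfgMaxWalk Υ g) {x y : α}
    (hx : x ∈ recurrentSet g) (hy : y ∈ recurrentSet g) : nfgReach Υ x y := by
  obtain ⟨m, rfl⟩ := hx.exists
  obtain ⟨n, hmn, rfl⟩ := frequently_atTop.mp hy m
  exact hwalk.nfgReach_of_le hmn

theorem nfgFair.mem_recurrentSet_of_nfgReach (hfair : nfgFair Υ g) {x y : α}
    (hx : x ∈ recurrentSet g) (hxy : nfgReach Υ x y) : y ∈ recurrentSet g := by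
  induction hxy with
  | refl => exact hx
  | tail _ hstep ih => exact frequently_atTop.mpr (hfair _ _ hstep (frequently_atTop.mp ih))

theorem nfgIsBasin_recurrentSet [Finite α] (hwalk : nfgMaxWalk Υ g) (hfair : nfgFair Υ g) :
    nfgIsBasin Υ (recurrentSet g) := by
  obtain ⟨G, hG⟩ := recurrentSet_nonempty (g := g)
  refine ⟨G, Set.ext fun x => ⟨fun hx => ?_, fun hx => ?_⟩, fun G' hGG' => ?_⟩
  · exact ⟨hwalk.nfgReach_of_mem_recurrentSet hG hx, hwalk.nfgReach_of_mem_recurrentSet hx hG⟩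
  · exact hfair.mem_recurrentSet_of_nfgReach hG hx.1
  · exact hwalk.nfgReach_of_mem_recurrentSet (hfair.mem_recurrentSet_of_nfgReach hG hGG') hG

theorem recurrentSet_nontrivial (hirr : ∀ x, ¬ Υ x x) (hfair : nfgFair Υ g) {x y : α}
    (hx : x ∈ recurrentSet g) (hxy : Υ x y) : (recurrentSet g).Nontrivial :=
  ⟨x, hx, y, hfair.mem_recurrentSet_of_nfgReach hx (.single hxy),
    fun h => hirr x (h ▸ hxy)⟩

end Recurrence

/-- Every maximal (fair) directed walk in the finite rule supernetwork `Υ` (no self-loops)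
either terminates at a pairwise stable network, or eventually enters and remains in a basin
containing at least two networks.  In particular, if all basins are singletons, every
sufficiently long sequence of permitted operations reaches a pairwise stable network. -/
theorem maximal_walk_stable_or_nontrivial_basin {𝔾 : Type*} [Fintype 𝔾]
    (Υ : 𝔾 → 𝔾 → Prop) (hirr : ∀ G, ¬ Υ G G)
    (g : ℕ → 𝔾) (hwalk : nfgMaxWalk Υ g) (hfair : nfgFair Υ g) :
    ((∃ n, ∀ y, ¬ Υ (g n) y) ∨
      (∃ B : Set 𝔾, nfgIsBasin Υ B ∧ B.Nontrivial ∧ ∃ n, ∀ k, n ≤ k → g k ∈ B)) ∧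
    ((∀ B : Set 𝔾, nfgIsBasin Υ B → ∃ x, B = {x}) → ∃ n, ∀ y, ¬ Υ (g n) y) := by
  have hmain : (∃ n, ∀ y, ¬ Υ (g n) y) ∨
      (∃ B : Set 𝔾, nfgIsBasin Υ B ∧ B.Nontrivial ∧ ∃ n, ∀ k, n ≤ k → g k ∈ B) := by
    by_cases hsink : ∃ x ∈ recurrentSet g, ∀ y, ¬ Υ x y
    · obtain ⟨x, hx, hxsink⟩ := hsink
      obtain ⟨n, rfl⟩ := hx.exists
      exact .inl ⟨n, hxsink⟩
    · push Not at hsink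
      obtain ⟨G, hG⟩ := recurrentSet_nonempty (g := g)
      obtain ⟨y, hGy⟩ := hsink G hG
      refine .inr ⟨recurrentSet g, nfgIsBasin_recurrentSet hwalk hfair,
        recurrentSet_nontrivial hirr hfair hG hGy, ?_⟩
      exact eventually_atTop.mp eventually_mem_recurrentSet
  refine ⟨hmain, fun hsingleton => hmain.resolve_right ?_⟩
  rintro ⟨B, hB, hnontriv, -⟩
  obtain ⟨x, rfl⟩ := hsingleton B hB
  exact hnontriv.ne_singleton rfl
end

section
/- If some basin of a network formation game contains at least two networks, then there exists an infinite sequence of permitted network formation operations that never reaches a pairwise stable network. Consequently, every sequence of operations is guaranteed to converge to a pairwise stable network after finitely many steps if and only if all basins are singletons. -/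
namespace NfgAux

variable {𝔾 : Type*}

theorem getLastD_eq_getLast' {α : Type*} (l : List α) (h : l ≠ []) (d : α) :
    l.getLastD d = l.getLast h := by
  cases l with
  | nil => simp at h
  | cons a l => simp [List.getLastD_eq_getLast?, List.getLast?_eq_getLast]

/-- One step of the walk state machine: state is (current, pending path, segment index). -/
def wstep (P : ℕ → List 𝔾) : 𝔾 × List 𝔾 × ℕ → 𝔾 × List 𝔾 × ℕ
  | (v, [], i) => (v, P i, i + 1)
  | (_, [w], i) => (w, P i, i + 1)
  | (_, w :: x :: q, i) => (w, x :: q, i)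

def wseq (t : ℕ → 𝔾) (P : ℕ → List 𝔾) : ℕ → 𝔾 × List 𝔾 × ℕ
  | 0 => (t 0, P 0, 1)
  | n + 1 => wstep P (wseq t P n)

theorem walk_exists (Υ : 𝔾 → 𝔾 → Prop) (t : ℕ → 𝔾) (P : ℕ → List 𝔾)
    (hne : ∀ i, P i ≠ [])
    (hchain : ∀ i, List.Chain Υ (t i) (P i))
    (hlast : ∀ i, (P i).getLastD (t i) = t (i + 1)) :
    ∃ g : ℕ → 𝔾, g 0 = t 0 ∧ (∀ k, Υ (g k) (g (k + 1))) ∧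
      ∀ i, ∃ n, i ≤ n ∧ g n = t i := by
  set s := wseq t P with hs
  set g : ℕ → 𝔾 := fun n => (s n).1 with hg
  set pend : ℕ → List 𝔾 := fun n => (s n).2.1 with hpend
  set idx : ℕ → ℕ := fun n => (s n).2.2 with hidx
  have heta : ∀ n, s n = (g n, pend n, idx n) := fun n => rfl
  have e : ∀ n, s (n + 1) = wstep P (g n, pend n, idx n) := fun n => by
    rw [← heta n]; rfl
  -- invariant
  have inv : ∀ n, pend n ≠ [] ∧ List.Chain Υ (g n) (pend n) ∧
      (pend n).getLastD (g n) = t (idx n) := by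
    intro n
    induction n with
    | zero => exact ⟨hne 0, hchain 0, hlast 0⟩
    | succ n ih =>
      obtain ⟨h1, h2, h3⟩ := ih
      rcases hp : pend n with _ | ⟨w, _ | ⟨x, q⟩⟩
      · exact absurd hp h1
      · have hst : s (n + 1) = (w, P (idx n), idx n + 1) := by
          rw [e n, hp]; rfl
        have hw : w = t (idx n) := by rw [hp] at h3; simpa using h3
        have k1 : g (n + 1) = w := congrArg Prod.fst hst
        have k2 : pend (n + 1) = P (idx n) := congrArg (fun p => p.2.1) hst
        have k3 : idx (n + 1) = idx n + 1 := congrArg (fun p => p.2.2) hst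
        refine ⟨?_, ?_, ?_⟩ <;> simp only [k1, k2, k3]
        · exact hne _
        · rw [hw]; exact hchain _
        · rw [hw]; exact hlast _
      · have hst : s (n + 1) = (w, x :: q, idx n) := by rw [e n, hp]; rfl
        rw [hp] at h2 h3
        have k1 : g (n + 1) = w := congrArg Prod.fst hst
        have k2 : pend (n + 1) = x :: q := congrArg (fun p => p.2.1) hst
        have k3 : idx (n + 1) = idx n := congrArg (fun p => p.2.2) hst
        refine ⟨?_, ?_, ?_⟩ <;> simp only [k1, k2, k3]
        · simp
        · exact (List.chain_cons.mp h2).2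
        · rw [getLastD_eq_getLast' _ (List.cons_ne_nil _ _)] at h3 ⊢; exact h3
  -- edges
  have edge : ∀ n, Υ (g n) (g (n + 1)) := by
    intro n
    obtain ⟨h1, h2, h3⟩ := inv n
    rcases hp : pend n with _ | ⟨w, _ | ⟨x, q⟩⟩
    · exact absurd hp h1
    · have hst : s (n + 1) = (w, P (idx n), idx n + 1) := by rw [e n, hp]; rfl
      have k1 : g (n + 1) = w := congrArg Prod.fst hst
      rw [hp] at h2
      rw [k1]; exact (List.chain_cons.mp h2).1
    · have hst : s (n + 1) = (w, x :: q, idx n) := by rw [e n, hp]; rfl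
      have k1 : g (n + 1) = w := congrArg Prod.fst hst
      rw [hp] at h2
      rw [k1]; exact (List.chain_cons.mp h2).1
  -- step analysis on idx
  have step : ∀ n, (idx (n + 1) = idx n ∧ (pend (n + 1)).length < (pend n).length) ∨
      (idx (n + 1) = idx n + 1 ∧ g (n + 1) = t (idx n)) := by
    intro n
    obtain ⟨h1, h2, h3⟩ := inv n
    rcases hp : pend n with _ | ⟨w, _ | ⟨x, q⟩⟩
    · exact absurd hp h1
    · have hst : s (n + 1) = (w, P (idx n), idx n + 1) := by rw [e n, hp]; rfl
      have hw : w = t (idx n) := by rw [hp] at h3; simpa using h3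
      exact Or.inr ⟨congrArg (fun p => p.2.2) hst,
        (congrArg Prod.fst hst).trans hw⟩
    · have hst : s (n + 1) = (w, x :: q, idx n) := by rw [e n, hp]; rfl
      refine Or.inl ⟨congrArg (fun p => p.2.2) hst, ?_⟩
      have k2 : pend (n + 1) = x :: q := congrArg (fun p => p.2.1) hst
      simp [k2]
  have idx0 : idx 0 = 1 := rfl
  have bound : ∀ n, idx n ≤ n + 1 := by
    intro n
    induction n with
    | zero => omega
    | succ n ih => rcases step n with ⟨h, _⟩ | ⟨h, _⟩ <;> omega
  -- claim A
  have claimA : ∀ L n, (pend n).length ≤ L →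
      ∃ m, n < m ∧ idx m = idx n + 1 ∧ g m = t (idx n) := by
    intro L
    induction L with
    | zero =>
      intro n hL
      have := (inv n).1
      have : 0 < (pend n).length := List.length_pos_iff.mpr this
      omega
    | succ L ih =>
      intro n hL
      rcases step n with ⟨h1, h2⟩ | ⟨h1, h2⟩
      · obtain ⟨m, hm1, hm2, hm3⟩ := ih (n + 1) (by omega)
        exact ⟨m, by omega, by rw [hm2, h1], by rw [hm3, h1]⟩
      · exact ⟨n + 1, by omega, h1, h2⟩
  have claimA' : ∀ n, ∃ m, n < m ∧ idx m = idx n + 1 ∧ g m = t (idx n) :=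
    fun n => claimA (pend n).length n le_rfl
  have claimB : ∀ j, ∃ n, idx n = j + 1 := by
    intro j
    induction j with
    | zero => exact ⟨0, idx0⟩
    | succ j ih =>
      obtain ⟨n, hn⟩ := ih
      obtain ⟨m, _, hm2, _⟩ := claimA' n
      exact ⟨m, by rw [hm2, hn]⟩
  refine ⟨g, rfl, edge, ?_⟩
  intro i
  cases i with
  | zero => exact ⟨0, le_rfl, rfl⟩
  | succ j =>
    obtain ⟨n, hn⟩ := claimB j
    obtain ⟨m, hm1, hm2, hm3⟩ := claimA' n
    refine ⟨m, ?_, by rw [hm3, hn]⟩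
    have := bound m
    omega

end NfgAux

/-- If some basin contains at least two networks, there is an infinite (fair) sequence of
permitted network formation operations that never reaches a pairwise stable network.
Consequently, every (fair, maximal) sequence of operations is guaranteed to reach a pairwise
stable network after finitely many steps iff all basins are singletons. -/
theorem nontrivial_basin_iff_nonconvergence {𝔾 : Type*} [Fintype 𝔾]
    (Υ : 𝔾 → 𝔾 → Prop) (hirr : ∀ G, ¬ Υ G G) :
    ((∃ B : Set 𝔾, nfgIsBasin Υ B ∧ B.Nontrivial) →
      ∃ g : ℕ → 𝔾, (∀ k, Υ (g k) (g (k + 1))) ∧ nfgFair Υ g ∧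
        ∀ n, ∃ y, Υ (g n) y) ∧
    ((∀ g : ℕ → 𝔾, nfgMaxWalk Υ g → nfgFair Υ g → ∃ n, ∀ y, ¬ Υ (g n) y) ↔
      (∀ B : Set 𝔾, nfgIsBasin Υ B → ∃ x, B = {x})) := by
  classical
  have main : (∃ B : Set 𝔾, nfgIsBasin Υ B ∧ B.Nontrivial) →
      ∃ g : ℕ → 𝔾, (∀ k, Υ (g k) (g (k + 1))) ∧ nfgFair Υ g ∧
        ∀ n, ∃ y, Υ (g n) y := by
    rintro ⟨B, ⟨G, hBeq, hcl⟩, x, hxB, y, hyB, hxy⟩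
    set S : Set 𝔾 := {z | Relation.ReflTransGen Υ G z ∧ Relation.ReflTransGen Υ z G}
      with hS
    have hxS : x ∈ S := by rw [hBeq] at hxB; exact hxB
    have hyS : y ∈ S := by rw [hBeq] at hyB; exact hyB
    have hclose : ∀ a ∈ S, ∀ w, Υ a w → w ∈ S := by
      intro a ha w hw
      have h1 : Relation.ReflTransGen Υ G w := ha.1.tail hw
      exact ⟨h1, hcl w h1⟩
    have outedge : ∀ a ∈ S, ∃ w, Υ a w ∧ w ∈ S := by
      intro a ha
      by_cases h : a = x
      · have hay : Relation.ReflTransGen Υ a y := ha.2.trans hyS.1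
        rcases hay.cases_head with h' | ⟨w, hw, _⟩
        · exact absurd (h.symm.trans h') hxy
        · exact ⟨w, hw, hclose a ha w hw⟩
      · have hax : Relation.ReflTransGen Υ a x := ha.2.trans hxS.1
        rcases hax.cases_head with h' | ⟨w, hw, _⟩
        · exact absurd h' h
        · exact ⟨w, hw, hclose a ha w hw⟩
    have pathfn : ∀ a b, a ∈ S → b ∈ S →
        ∃ l : List 𝔾, l ≠ [] ∧ List.Chain Υ a l ∧ l.getLastD a = b := by
      intro a b ha hb
      obtain ⟨w, hw, hwS⟩ := outedge a ha
      have hwb : Relation.ReflTransGen Υ w b := hwS.2.trans hb.1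
      obtain ⟨c, hc, hcl'⟩ := List.exists_isChain_cons_of_relationReflTransGen hwb
      refine ⟨w :: c, by simp, List.chain_cons.mpr ⟨hw, hc⟩, ?_⟩
      rw [NfgAux.getLastD_eq_getLast' (w :: c) (List.cons_ne_nil _ _) a]
      exact hcl'
    -- enumeration of S
    let l : List 𝔾 := (Finset.univ.filter (· ∈ S)).toList
    have hmem : ∀ b, b ∈ l ↔ b ∈ S := by
      intro b
      simp [l, Finset.mem_toList, Finset.mem_filter]
    have hlen : 0 < l.length :=
      List.length_pos_iff.mpr (List.ne_nil_of_mem ((hmem x).mpr hxS))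
    set t : ℕ → 𝔾 := fun i => l.get ⟨i % l.length, Nat.mod_lt _ hlen⟩ with ht
    have htS : ∀ i, t i ∈ S := fun i => (hmem _).mp (l.get_mem _)
    have hhit : ∀ b ∈ S, ∀ N : ℕ, ∃ i, N ≤ i ∧ t i = b := by
      intro b hb N
      obtain ⟨k, hk⟩ := List.mem_iff_get.mp ((hmem b).mpr hb)
      refine ⟨(k : ℕ) + N * l.length, ?_, ?_⟩
      · have := Nat.le_mul_of_pos_right N hlen
        omega
      · have hmod : ((k : ℕ) + N * l.length) % l.length = (k : ℕ) := by
          rw [Nat.add_mul_mod_self_right]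
          exact Nat.mod_eq_of_lt k.2
        have : (⟨((k : ℕ) + N * l.length) % l.length, Nat.mod_lt _ hlen⟩ :
            Fin l.length) = k := Fin.ext hmod
        show l.get _ = b
        rw [this, hk]
    choose P hPne hPchain hPlast using
      fun i => pathfn (t i) (t (i + 1)) (htS i) (htS (i + 1))
    obtain ⟨g, hg0, hedge, hvisit⟩ := NfgAux.walk_exists Υ t P hPne hPchain hPlast
    have hgS : ∀ n, g n ∈ S := by
      intro n
      induction n with
      | zero => rw [hg0]; exact htS 0
      | succ n ih => exact hclose _ ih _ (hedge n)
    refine ⟨g, hedge, ?_, fun n => ⟨g (n + 1), hedge n⟩⟩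
    intro a b hab hcofa n
    obtain ⟨m, _, hma⟩ := hcofa 0
    have haS : a ∈ S := hma ▸ hgS m
    have hbS : b ∈ S := hclose a haS b hab
    obtain ⟨i, hiN, hib⟩ := hhit b hbS n
    obtain ⟨m', hm'i, hm'⟩ := hvisit i
    exact ⟨m', le_trans hiN hm'i, by rw [hm', hib]⟩
  refine ⟨main, ?_, ?_⟩
  · -- convergence → all basins singletons
    intro hconv B hbasin
    by_contra hns
    obtain ⟨G, hBeq, hcl⟩ := hbasin
    have hGB : G ∈ B := by
      rw [hBeq]; exact ⟨Relation.ReflTransGen.refl, Relation.ReflTransGen.refl⟩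
    have hnt : B.Nontrivial := by
      by_contra h'
      exact hns ⟨G, Set.eq_singleton_iff_unique_mem.mpr
        ⟨hGB, fun z hz => (Set.not_nontrivial_iff.mp h') hz hGB⟩⟩
    obtain ⟨g, hedge, hfair, hns'⟩ := main ⟨B, ⟨G, hBeq, hcl⟩, hnt⟩
    obtain ⟨n, hn⟩ := hconv g (fun k => Or.inl (hedge k)) hfair
    obtain ⟨y, hy⟩ := hns' n
    exact hn y hy
  · -- all basins singletons → convergence
    intro hsing g hmax hfair
    by_contra hno
    push_neg at hno
    have hedge : ∀ k, Υ (g k) (g (k + 1)) := by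
      intro k
      rcases hmax k with h | ⟨h, _⟩
      · exact h
      · obtain ⟨y, hy⟩ := hno k
        exact absurd hy (h y)
    have hreach : ∀ n k, Relation.ReflTransGen Υ (g n) (g (n + k)) := by
      intro n k
      induction k with
      | zero => exact Relation.ReflTransGen.refl
      | succ k ih => exact ih.tail (hedge (n + k))
    have hreach' : ∀ n m, n ≤ m → Relation.ReflTransGen Υ (g n) (g m) := by
      intro n m h
      obtain ⟨k, rfl⟩ := Nat.exists_eq_add_of_le h
      exact hreach n k
    obtain ⟨x, hxinf⟩ := Finite.exists_infinite_fiber g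
    have hxcof : ∀ n, ∃ m, n ≤ m ∧ g m = x := by
      intro n
      have hi : (g ⁻¹' {x}).Infinite := Set.infinite_coe_iff.mp hxinf
      obtain ⟨m, hm, hlt⟩ := hi.exists_gt n
      exact ⟨m, hlt.le, hm⟩
    set Cof : Set 𝔾 := {z | ∀ n, ∃ m, n ≤ m ∧ g m = z} with hCof
    have hxC : x ∈ Cof := hxcof
    have hbi : ∀ a ∈ Cof, ∀ b ∈ Cof, Relation.ReflTransGen Υ a b := by
      intro a ha b hb
      obtain ⟨m, _, hma⟩ := ha 0
      obtain ⟨m', hmm, hmb⟩ := hb m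
      exact hma ▸ hmb ▸ hreach' m m' hmm
    have hclC : ∀ a ∈ Cof, ∀ b, Υ a b → b ∈ Cof := fun a ha b hab => hfair a b hab ha
    have hreachC : ∀ z, Relation.ReflTransGen Υ x z → z ∈ Cof := by
      intro z hz
      induction hz with
      | refl => exact hxC
      | tail h1 h2 ih => exact hclC _ ih _ h2
    have hbasin : nfgIsBasin Υ {z | nfgReach Υ x z ∧ nfgReach Υ z x} :=
      ⟨x, rfl, fun z hz => hbi z (hreachC z hz) x hxC⟩
    obtain ⟨c, hc⟩ := hsing _ hbasin
    have hxmem : x ∈ ({z | nfgReach Υ x z ∧ nfgReach Υ z x} : Set 𝔾) :=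
      ⟨Relation.ReflTransGen.refl, Relation.ReflTransGen.refl⟩
    obtain ⟨m0, _, hm0⟩ := hxcof 0
    obtain ⟨w, hw⟩ := hno m0
    rw [hm0] at hw
    have hwC : w ∈ Cof := hclC x hxC w hw
    have hwmem : w ∈ ({z | nfgReach Υ x z ∧ nfgReach Υ z x} : Set 𝔾) :=
      ⟨hbi x hxC w hwC, hbi w hwC x hxC⟩
    rw [hc] at hxmem hwmem
    have hwx : w = x := hwmem.trans hxmem.symm
    exact hirr x (hwx ▸ hw)
end
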